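/- No ordered local pressure-related dynamic converges to equilibrium: for every OLP mapping Y fixing Q̂ and every ε > 0, there exists Q₀ ∈ 𝒬 with 0 < d(Q₀, Q̂) ≤ ε such that the sequence Q_{k+1} = Y(Q_k) satisfies d(Q_k, Q̂) ≥ d(Q₀, Q̂) > 0 for all k, hence does not converge to Q̂. -/

import Mathlib

/-!
Where Q̂ is differentiable, the cost derivative `C'(t | Q)` is exactly the derivative of the
deviation `F = Q - Q̂`, so the OLP condition says that `Y(Q) - Q` has the sign of `F'`. Hence
wherever `F` exceeds a level `m` and is increasing, `Y(Q) - Q̂ ≥ F > m`. If `|Y(Q) - Q̂| ≤ m`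
everywhere, then `F`, which starts at `F(τₛ) = 0`, can never climb above `m` (and symmetrically
for `-F`), so `d(Q, Q̂) ≤ d(Y(Q), Q̂)`: an OLP step never moves a profile closer to equilibrium.
Any small rescaling `(1 - δ) Q̂` therefore serves as `Q₀`.
-/

/-- A function is piecewise continuously differentiable on [a,b] if [a,b] can be
partitioned into finitely many subintervals, on the interior of each of which the
function is differentiable with continuous derivative. -/
def PiecewiseC1On (f : ℝ → ℝ) (a b : ℝ) : Prop :=
  ∃ (k : ℕ) (p : ℕ → ℝ), 0 < k ∧ p 0 = a ∧ p k = b ∧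
    (∀ i < k, p i < p (i + 1)) ∧
    ∀ i < k, (∀ t ∈ Set.Ioo (p i) (p (i + 1)), DifferentiableAt ℝ f t) ∧
      ContinuousOn (deriv f) (Set.Ioo (p i) (p (i + 1)))

/-- The class 𝒬 of admissible queueing delay profiles on [τₛ, τₑ]. -/
def QSpace (τs τe : ℝ) : Set (ℝ → ℝ) :=
  {Q | ContinuousOn Q (Set.Icc τs τe) ∧ PiecewiseC1On Q τs τe ∧
    Q τs = 0 ∧ Q τe = 0 ∧ (∀ t ∈ Set.Ioo τs τe, 0 < Q t) ∧
    ∀ t₁ ∈ Set.Icc τs τe, ∀ t₂ ∈ Set.Icc τs τe, t₁ < t₂ → Q t₂ - Q t₁ < t₂ - t₁}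

/-- Sup-norm distance between two queueing profiles on [τₛ, τₑ]. -/
noncomputable def supDist (τs τe : ℝ) (Q₁ Q₂ : ℝ → ℝ) : ℝ :=
  sSup ((fun t => |Q₁ t - Q₂ t|) '' Set.Icc τs τe)

/-- Derivative of the cost profile of the traveler n(t) = N₁ + t·s arriving at t,
given queueing profile Q: C'_{n(t)}(t | Q). -/
noncomputable def costDeriv (β γ : ℝ → ℝ) (N₁ s : ℝ) (Q : ℝ → ℝ) (t : ℝ) : ℝ :=
  if t < 0 then deriv Q t - β (N₁ + t * s) else deriv Q t + γ (N₁ + t * s)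

/-- Ordered local pressure-related (OLP) dynamics: the mapping preserves 𝒬, and
wherever Q is differentiable the change in queue has the sign of the local cost
derivative. -/
def IsOLP (τs τe : ℝ) (β γ : ℝ → ℝ) (N₁ s : ℝ) (Y : (ℝ → ℝ) → (ℝ → ℝ)) : Prop :=
  (∀ Q ∈ QSpace τs τe, Y Q ∈ QSpace τs τe) ∧
  ∀ Q ∈ QSpace τs τe, ∀ t ∈ Set.Ioo τs τe, t ≠ 0 → DifferentiableAt ℝ Q t →
    0 ≤ (Y Q t - Q t) * costDeriv β γ N₁ s Q t

open Set

theorem PiecewiseC1On.exists_finset_differentiableAt {f : ℝ → ℝ} {a b : ℝ}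
    (hf : PiecewiseC1On f a b) :
    ∃ S : Finset ℝ, ∀ c ∈ Ioo a b \ S, DifferentiableAt ℝ f c := by
  obtain ⟨k, p, -, hp0, hpk, -, hpC1⟩ := hf
  refine ⟨(Finset.range (k + 1)).image p, fun c ⟨hc, hcS⟩ => ?_⟩
  have hex : ∃ j, c < p j := ⟨k, hpk ▸ hc.2⟩
  have hjk : Nat.find hex ≤ k := Nat.find_min' hex (hpk ▸ hc.2)
  have hj0 : Nat.find hex ≠ 0 := by
    intro h
    have hca := Nat.find_spec hex
    rw [h, hp0] at hca
    exact lt_asymm hc.1 hca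
  obtain ⟨i, hi⟩ := Nat.exists_eq_succ_of_ne_zero hj0
  have hpi : p i ≤ c := not_lt.1 (Nat.find_min hex (by omega))
  have hne : p i ≠ c := fun h =>
    hcS (Finset.mem_image.2 ⟨i, Finset.mem_range.2 (by omega), h⟩)
  exact (hpC1 i (by omega)).1 c ⟨hpi.lt_of_ne hne, by simpa [hi] using Nat.find_spec hex⟩

theorem PiecewiseC1On.const_mul {f : ℝ → ℝ} {a b : ℝ} (hf : PiecewiseC1On f a b) (r : ℝ) :
    PiecewiseC1On (fun t => r * f t) a b := by
  obtain ⟨k, p, hk, hp0, hpk, hp, hpC1⟩ := hf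
  refine ⟨k, p, hk, hp0, hpk, hp, fun i hi => ⟨fun t ht => ((hpC1 i hi).1 t ht).const_mul r, ?_⟩⟩
  exact ((hpC1 i hi).2.const_smul r).congr fun t ht => deriv_const_mul r ((hpC1 i hi).1 t ht)

theorem le_of_deriv_nonpos_off_finset {f : ℝ → ℝ} (S : Finset ℝ) :
    ∀ {u v : ℝ}, u ≤ v → ContinuousOn f (Icc u v) →
      (∀ c ∈ Ioo u v \ S, DifferentiableAt ℝ f c) →
      (∀ c ∈ Ioo u v \ S, deriv f c ≤ 0) → f v ≤ f u := by
  induction S using Finset.strongInduction with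
  | H S ih =>
    intro u v huv hcont hdiff hder
    by_cases hS : ∃ w ∈ S, w ∈ Ioo u v
    · obtain ⟨w, hwS, huw, hwv⟩ := hS
      have hleft : Ioo u w \ ↑(S.erase w) ⊆ Ioo u v \ S := fun c ⟨hc, hcS⟩ =>
        ⟨⟨hc.1, hc.2.trans hwv⟩, fun h => hcS (Finset.mem_erase.2 ⟨hc.2.ne, h⟩)⟩
      have hright : Ioo w v \ ↑(S.erase w) ⊆ Ioo u v \ S := fun c ⟨hc, hcS⟩ =>
        ⟨⟨huw.trans hc.1, hc.2⟩, fun h => hcS (Finset.mem_erase.2 ⟨hc.1.ne', h⟩)⟩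
      have hwu : f w ≤ f u := ih _ (Finset.erase_ssubset hwS) huw.le
        (hcont.mono (Icc_subset_Icc_right hwv.le))
        (fun c hc => hdiff c (hleft hc)) (fun c hc => hder c (hleft hc))
      have hvw : f v ≤ f w := ih _ (Finset.erase_ssubset hwS) hwv.le
        (hcont.mono (Icc_subset_Icc_left huw.le))
        (fun c hc => hdiff c (hright hc)) (fun c hc => hder c (hright hc))
      exact hvw.trans hwu
    · push Not at hS
      have hint : interior (Icc u v) ⊆ Ioo u v \ S := by
        rw [interior_Icc]
        exact fun c hc => ⟨hc, fun hcS => hS c hcS hc⟩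
      exact antitoneOn_of_deriv_nonpos (convex_Icc u v) hcont
        (fun c hc => (hdiff c (hint hc)).differentiableWithinAt)
        (fun c hc => hder c (hint hc)) (left_mem_Icc.2 huv) (right_mem_Icc.2 huv) huv

theorem le_of_deriv_nonpos_above {f : ℝ → ℝ} {a b m : ℝ} (S : Finset ℝ) (hab : a ≤ b)
    (hf : ContinuousOn f (Icc a b)) (ha : f a ≤ m)
    (hdiff : ∀ c ∈ Ioo a b \ S, DifferentiableAt ℝ f c)
    (hder : ∀ c ∈ Ioo a b \ S, m < f c → deriv f c ≤ 0) : f b ≤ m := by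
  by_contra! hb
  set A := Icc a b ∩ f ⁻¹' Iic m
  have hAclosed : IsClosed A := hf.preimage_isClosed_of_isClosed isClosed_Icc isClosed_Iic
  have hAbdd : BddAbove A := bddAbove_Icc.mono inter_subset_left
  obtain ⟨⟨hat, htb⟩, hft : f (sSup A) ≤ m⟩ : sSup A ∈ A :=
    hAclosed.csSup_mem ⟨a, left_mem_Icc.2 hab, ha⟩ hAbdd
  have hlast : ∀ c ∈ Ioc (sSup A) b, m < f c := fun c hc => not_le.1 fun hfc =>
    (le_csSup hAbdd ⟨⟨hat.trans hc.1.le, hc.2⟩, hfc⟩).not_gt hc.1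
  have hsub : Ioo (sSup A) b \ S ⊆ Ioo a b \ S := fun c ⟨hc, hcS⟩ =>
    ⟨⟨hat.trans_lt hc.1, hc.2⟩, hcS⟩
  have hbt : f b ≤ f (sSup A) := le_of_deriv_nonpos_off_finset S htb
    (hf.mono (Icc_subset_Icc_left hat)) (fun c hc => hdiff c (hsub hc))
    (fun c hc => hder c (hsub hc) (hlast c ⟨hc.1.1, hc.1.2.le⟩))
  linarith

theorem abs_le_of_sub_mul_deriv_nonneg {F G : ℝ → ℝ} {a b m : ℝ} (S : Finset ℝ) (hab : a ≤ b)
    (hF : ContinuousOn F (Icc a b)) (ha : |F a| ≤ m)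
    (hdiff : ∀ c ∈ Ioo a b \ S, DifferentiableAt ℝ F c)
    (hsign : ∀ c ∈ Ioo a b \ S, 0 ≤ (G c - F c) * deriv F c)
    (hG : ∀ c ∈ Ioo a b, |G c| ≤ m) : |F b| ≤ m := by
  rw [abs_le] at ha ⊢
  have hG' : ∀ c ∈ Ioo a b, -m ≤ G c ∧ G c ≤ m := fun c hc => abs_le.1 (hG c hc)
  constructor
  · have hneg : -F b ≤ m := le_of_deriv_nonpos_above (f := fun x => -F x) S hab hF.neg
      (by linarith) (fun c hc => (hdiff c hc).neg) fun c hc hmc => by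
        rw [deriv.fun_neg, neg_nonpos]
        by_contra! hderiv
        have := nonpos_of_mul_nonneg_left (hsign c hc) hderiv
        linarith [hG' c hc.1]
    linarith
  · refine le_of_deriv_nonpos_above S hab hF ha.2 hdiff fun c hc hmc => ?_
    by_contra! hpos
    have := nonneg_of_mul_nonneg_left (hsign c hc) hpos
    linarith [hG' c hc.1]

theorem abs_sub_le_supDist {τs τe t : ℝ} {Q₁ Q₂ : ℝ → ℝ} (h₁ : ContinuousOn Q₁ (Icc τs τe))
    (h₂ : ContinuousOn Q₂ (Icc τs τe)) (ht : t ∈ Icc τs τe) :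
    |Q₁ t - Q₂ t| ≤ supDist τs τe Q₁ Q₂ :=
  le_csSup (isCompact_Icc.image_of_continuousOn (h₁.sub h₂).abs).bddAbove (mem_image_of_mem _ ht)

theorem supDist_le {τs τe m : ℝ} {Q₁ Q₂ : ℝ → ℝ} (hτ : τs ≤ τe)
    (hm : ∀ t ∈ Icc τs τe, |Q₁ t - Q₂ t| ≤ m) : supDist τs τe Q₁ Q₂ ≤ m :=
  csSup_le ((nonempty_Icc.2 hτ).image _) (forall_mem_image.2 hm)

section QSpace

variable {τs τe : ℝ} {Q : ℝ → ℝ}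

theorem nonneg_of_mem_QSpace (hQ : Q ∈ QSpace τs τe) {t : ℝ} (ht : t ∈ Icc τs τe) :
    0 ≤ Q t := by
  rcases ht.1.eq_or_lt with rfl | hst
  · exact hQ.2.2.1.ge
  rcases ht.2.eq_or_lt with rfl | hte
  · exact hQ.2.2.2.1.ge
  exact (hQ.2.2.2.2.1 t ⟨hst, hte⟩).le

theorem le_sub_of_mem_QSpace (hQ : Q ∈ QSpace τs τe) {t : ℝ} (ht : t ∈ Icc τs τe) :
    Q t ≤ t - τs := by
  rcases ht.1.eq_or_lt with rfl | hst
  · simp [hQ.2.2.1]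
  have := hQ.2.2.2.2.2 τs (left_mem_Icc.2 (ht.1.trans ht.2)) t ht hst
  linarith [hQ.2.2.1]

theorem const_mul_mem_QSpace (hQ : Q ∈ QSpace τs τe) {r : ℝ} (hr0 : 0 < r) (hr1 : r ≤ 1) :
    (fun t => r * Q t) ∈ QSpace τs τe := by
  obtain ⟨hc, hpc, hs, he, hpos, hlip⟩ := hQ
  refine ⟨hc.const_smul r, hpc.const_mul r, by simp [hs], by simp [he],
    fun t ht => mul_pos hr0 (hpos t ht), fun t₁ h₁ t₂ h₂ h => ?_⟩
  have := hlip t₁ h₁ t₂ h₂ h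
  rcases le_or_gt (Q t₂ - Q t₁) 0 with hd | hd <;> nlinarith

end QSpace

section OLP

variable {τs τe N₁ s : ℝ} {β γ Qhat Q : ℝ → ℝ}

theorem hasDerivAt_sub_costDeriv
    (hQhat1 : ∀ t ∈ Ioo τs 0, HasDerivAt Qhat (β (N₁ + t * s)) t)
    (hQhat2 : ∀ t ∈ Ioo 0 τe, HasDerivAt Qhat (-γ (N₁ + t * s)) t)
    {t : ℝ} (ht : t ∈ Ioo τs τe) (ht0 : t ≠ 0) (hQ : DifferentiableAt ℝ Q t) :
    HasDerivAt (fun u => Q u - Qhat u) (costDeriv β γ N₁ s Q t) t := by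
  rcases ht0.lt_or_gt with hneg | hpos
  · rw [costDeriv, if_pos hneg]
    exact hQ.hasDerivAt.sub (hQhat1 t ⟨ht.1, hneg⟩)
  · rw [costDeriv, if_neg hpos.not_gt, ← sub_neg_eq_add]
    exact hQ.hasDerivAt.sub (hQhat2 t ⟨hpos, ht.2⟩)

theorem supDist_le_supDist_of_isOLP {Y : (ℝ → ℝ) → ℝ → ℝ} (hτ : τs < τe)
    (hQhat : Qhat ∈ QSpace τs τe)
    (hQhat1 : ∀ t ∈ Ioo τs 0, HasDerivAt Qhat (β (N₁ + t * s)) t)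
    (hQhat2 : ∀ t ∈ Ioo 0 τe, HasDerivAt Qhat (-γ (N₁ + t * s)) t)
    (hY : IsOLP τs τe β γ N₁ s Y) (hQ : Q ∈ QSpace τs τe) :
    supDist τs τe Q Qhat ≤ supDist τs τe (Y Q) Qhat := by
  obtain ⟨S, hS⟩ := hQ.2.1.exists_finset_differentiableAt
  have hYQ := hY.1 Q hQ
  refine supDist_le hτ.le fun t ht => ?_
  have hgood : ∀ c ∈ Ioo τs t \ ↑(insert 0 S),
      HasDerivAt (fun u => Q u - Qhat u) (costDeriv β γ N₁ s Q c) c ∧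
        0 ≤ (Y Q c - Q c) * costDeriv β γ N₁ s Q c := by
    rintro c ⟨hc, hcS⟩
    simp only [Finset.coe_insert, mem_insert_iff, Finset.mem_coe, not_or] at hcS
    have hc' : c ∈ Ioo τs τe := ⟨hc.1, hc.2.trans_le ht.2⟩
    have hQc := hS c ⟨hc', hcS.2⟩
    exact ⟨hasDerivAt_sub_costDeriv hQhat1 hQhat2 hc' hcS.1 hQc, hY.2 Q hQ c hc' hcS.1 hQc⟩
  refine abs_le_of_sub_mul_deriv_nonneg (F := fun u => Q u - Qhat u)
    (G := fun u => Y Q u - Qhat u) _ ht.1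
    ((hQ.1.sub hQhat.1).mono (Icc_subset_Icc_right ht.2)) ?_
    (fun c hc => (hgood c hc).1.differentiableAt) (fun c hc => ?_)
    (fun c hc => abs_sub_le_supDist hYQ.1 hQhat.1 ⟨hc.1.le, hc.2.le.trans ht.2⟩)
  · simpa [hQ.2.2.1, hYQ.2.2.1] using abs_sub_le_supDist hYQ.1 hQhat.1 (left_mem_Icc.2 hτ.le)
  · rw [(hgood c hc).1.deriv, sub_sub_sub_cancel_right]
    exact (hgood c hc).2

theorem supDist_le_supDist_iterate_of_isOLP {Y : (ℝ → ℝ) → ℝ → ℝ} (hτ : τs < τe)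
    (hQhat : Qhat ∈ QSpace τs τe)
    (hQhat1 : ∀ t ∈ Ioo τs 0, HasDerivAt Qhat (β (N₁ + t * s)) t)
    (hQhat2 : ∀ t ∈ Ioo 0 τe, HasDerivAt Qhat (-γ (N₁ + t * s)) t)
    (hY : IsOLP τs τe β γ N₁ s Y) (hQ : Q ∈ QSpace τs τe) (k : ℕ) :
    supDist τs τe Q Qhat ≤ supDist τs τe (Y^[k] Q) Qhat := by
  have hmem : ∀ n, Y^[n] Q ∈ QSpace τs τe := fun n =>
    MapsTo.iterate (f := Y) (fun P hP => hY.1 P hP) n hQ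
  refine monotone_nat_of_le_succ (f := fun n => supDist τs τe (Y^[n] Q) Qhat)
    (fun n => ?_) (Nat.zero_le k)
  rw [Function.iterate_succ_apply']
  exact supDist_le_supDist_of_isOLP hτ hQhat hQhat1 hQhat2 hY (hmem n)

end OLP

theorem exists_mem_QSpace_supDist_pos_le {τs τe ε : ℝ} {Qhat : ℝ → ℝ} (hτ : τs < τe)
    (hQhat : Qhat ∈ QSpace τs τe) (hε : 0 < ε) :
    ∃ Q₀ ∈ QSpace τs τe, 0 < supDist τs τe Q₀ Qhat ∧ supDist τs τe Q₀ Qhat ≤ ε := by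
  have hlen : 0 < τe - τs := sub_pos.2 hτ
  -- `Q̂ ≤ τe - τs`, so rescaling by `1 - δ` moves `Q̂` by at most `δ (τe - τs)`.
  set δ := min (1 / 2) (ε / (τe - τs))
  have hδ : 0 < δ := lt_min (by norm_num) (div_pos hε hlen)
  have hδ2 : δ ≤ 1 / 2 := min_le_left _ _
  have hQ₀ := const_mul_mem_QSpace hQhat (r := 1 - δ) (by linarith) (by linarith)
  have hdist : ∀ t, |(1 - δ) * Qhat t - Qhat t| = δ * |Qhat t| := fun t => by
    rw [show (1 - δ) * Qhat t - Qhat t = -(δ * Qhat t) by ring, abs_neg, abs_mul, abs_of_pos hδ]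
  refine ⟨_, hQ₀, ?_, supDist_le hτ.le fun t ht => ?_⟩
  · obtain ⟨t₀, ht₀⟩ := nonempty_Ioo.2 hτ
    calc 0 < δ * |Qhat t₀| := mul_pos hδ (abs_pos.2 (hQhat.2.2.2.2.1 t₀ ht₀).ne')
      _ = _ := (hdist t₀).symm
      _ ≤ _ := abs_sub_le_supDist hQ₀.1 hQhat.1 (Ioo_subset_Icc_self ht₀)
  · rw [hdist, abs_of_nonneg (nonneg_of_mem_QSpace hQhat ht)]
    calc δ * Qhat t ≤ ε / (τe - τs) * (τe - τs) :=
          mul_le_mul (min_le_right _ _) (by linarith [le_sub_of_mem_QSpace hQhat ht, ht.2])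
            (nonneg_of_mem_QSpace hQhat ht) (div_nonneg hε.le hlen.le)
      _ = ε := div_mul_cancel₀ _ hlen.ne'

theorem olp_instability_general
    (N₁ s τs τe : ℝ)
    (hτs : τs < 0) (hτe : 0 < τe)
    (β γ : ℝ → ℝ)
    (Qhat : ℝ → ℝ) (hQhat : Qhat ∈ QSpace τs τe)
    (hQhat1 : ∀ t ∈ Set.Ioo τs 0, HasDerivAt Qhat (β (N₁ + t * s)) t)
    (hQhat2 : ∀ t ∈ Set.Ioo 0 τe, HasDerivAt Qhat (-γ (N₁ + t * s)) t) :
    ∀ Y : (ℝ → ℝ) → (ℝ → ℝ), IsOLP τs τe β γ N₁ s Y → Y Qhat = Qhat →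
    ∀ ε > 0, ∃ Q₀ ∈ QSpace τs τe,
      0 < supDist τs τe Q₀ Qhat ∧ supDist τs τe Q₀ Qhat ≤ ε ∧
      ∀ k : ℕ, supDist τs τe Q₀ Qhat ≤ supDist τs τe (Y^[k] Q₀) Qhat := by
  intro Y hY _ ε hε
  have hτ : τs < τe := hτs.trans hτe
  obtain ⟨Q₀, hQ₀, hpos, hle⟩ := exists_mem_QSpace_supDist_pos_le hτ hQhat hε
  exact ⟨Q₀, hQ₀, hpos, hle,
    supDist_le_supDist_iterate_of_isOLP hτ hQhat hQhat1 hQhat2 hY hQ₀⟩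

/-- No OLP dynamic converges to equilibrium: for every OLP mapping Y
fixing Q̂ and every ε > 0 there is a profile Q₀ ∈ 𝒬 with 0 < d(Q₀,Q̂) ≤ ε whose
iterates never get closer to Q̂ than Q₀. -/
theorem olp_instability
    (N N₁ s τs τe : ℝ) (hs : 0 < s) (hN : 0 < N)
    (hτs : τs < 0) (hτe : 0 < τe) (hN₁ : N₁ = -s * τs) (hτeN : τe = τs + N / s)
    (β γ : ℝ → ℝ)
    (hβc : ContinuousOn β (Set.Icc 0 N))
    (hβmono : StrictMonoOn β (Set.Icc 0 N))
    (hβmem : ∀ n ∈ Set.Icc (0:ℝ) N, β n ∈ Set.Ioo (0:ℝ) 1)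
    (hγc : ContinuousOn γ (Set.Icc 0 N))
    (hγanti : StrictAntiOn γ (Set.Icc 0 N))
    (hγpos : ∀ n ∈ Set.Icc (0:ℝ) N, 0 < γ n)
    (Qhat : ℝ → ℝ) (hQhat : Qhat ∈ QSpace τs τe)
    (hQhat1 : ∀ t ∈ Set.Ioo τs 0, HasDerivAt Qhat (β (N₁ + t * s)) t)
    (hQhat2 : ∀ t ∈ Set.Ioo 0 τe, HasDerivAt Qhat (-γ (N₁ + t * s)) t) :
    ∀ Y : (ℝ → ℝ) → (ℝ → ℝ), IsOLP τs τe β γ N₁ s Y → Y Qhat = Qhat →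
    ∀ ε > 0, ∃ Q₀ ∈ QSpace τs τe,
      0 < supDist τs τe Q₀ Qhat ∧ supDist τs τe Q₀ Qhat ≤ ε ∧
      ∀ k : ℕ, supDist τs τe Q₀ Qhat ≤ supDist τs τe (Y^[k] Q₀) Qhat :=
  olp_instability_general N₁ s τs τe hτs hτe β γ Qhat hQhat hQhat1 hQhat2
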